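/- Let S and T be fold strings with associated folding morphisms θ_S and θ_T. Then the folding morphism of the folding convolution S*T is the composition: θ_{S*T} = θ_S ∘ θ_T. -/

import Mathlib

open scoped Classical

/-- Letters of the folding alphabet {D, U}. -/
inductive FoldLetter : Type
  | D : FoldLetter
  | U : FoldLetter
deriving DecidableEq

/-- Words over {D, U}. -/
abbrev FWord := List FoldLetter

/-- The letter morphism μ swapping D and U. -/
def mir : FoldLetter → FoldLetter
  | .D => .U
  | .U => .D

/-- S̄ = μ(τ(S)): reverse the word and swap D and U. -/
def fbar (S : FWord) : FWord := (S.reverse).map mir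

/-- The folding convolution S * T. -/
def conv (S : FWord) : FWord → FWord
  | [] => S
  | b :: T => S ++ b :: conv (fbar S) T

/-- A fold string: a nonempty word over {D,U} starting with D. -/
def IsFoldString (S : FWord) : Prop := S ≠ [] ∧ S.head? = some FoldLetter.D

/-- The alphabet A = {a,b,c,d}, encoded as ZMod 4 (a = 0, b = 1, c = 2, d = 3),
so that σ is addition of 1 and f is k ↦ i^k. -/
abbrev Alpha := ZMod 4

/-- Words over A. -/
abbrev AWord := List Alpha

/-- w(D) = 1, w(U) = -1. -/
def wInt : FoldLetter → ℤ
  | .D => 1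
  | .U => -1

/-- The homomorphism w on words. -/
def wSum (S : FWord) : ℤ := (S.map wInt).sum

/-- θ_S(a) = e₀ e₁ ⋯ e_{m-1} with e₀ = a and e_i = σ^{w(a₁⋯a_i)}(a). -/
def thetaA (S : FWord) : AWord :=
  (List.range (S.length + 1)).map (fun i => ((wSum (S.take i) : ℤ) : Alpha))

/-- The word operation στ (reverse, then cyclically shift each letter). -/
def st (v : AWord) : AWord := v.reverse.map (· + 1)

/-- θ_S on a letter: θ_S(σ^k(a)) = (στ)^k (θ_S(a)). -/
def thetaL (S : FWord) (e : Alpha) : AWord := st^[e.val] (thetaA S)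

/-- The folding morphism θ_S as a monoid endomorphism of A*. -/
def theta (S : FWord) (v : AWord) : AWord := v.flatMap (thetaL S)

/-- f on letters: f(a) = 1, f(b) = i, f(c) = -1, f(d) = -i. -/
noncomputable def fL : Alpha → ℂ := fun e => Complex.I ^ e.val

/-- The homomorphism f : A* → (ℂ, +). -/
noncomputable def fW (v : AWord) : ℂ := (v.map fL).sum

/-- The k-th point z_k of the curve of a word v. -/
noncomputable def pt (v : AWord) (k : ℕ) : ℂ := fW (v.take k)

/-- The curve of v traverses a segment twice. -/
def TraversesTwice (v : AWord) : Prop :=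
  ∃ k l, k < v.length ∧ l < v.length ∧ k ≠ l ∧
    ({pt v k, pt v (k + 1)} : Set ℂ) = ({pt v l, pt v (l + 1)} : Set ℂ)

/-- The fold string S is self-avoiding. -/
def SelfAvoiding (S : FWord) : Prop :=
  ∀ n : ℕ, 1 ≤ n → ¬ TraversesTwice ((theta S)^[n] [0])

/-- z ∈ ℂ is a Gaussian integer. -/
def IsGaussianInt (z : ℂ) : Prop := ∃ p q : ℤ, z = (p : ℂ) + (q : ℂ) * Complex.I

/-- The number of indices k ∈ {0, …, |v|} with z_k = z (occurrences of z among
the points of the curve of v). -/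
noncomputable def countAt (v : AWord) (z : ℂ) : ℕ :=
  ((Finset.range (v.length + 1)).filter (fun k => pt v k = z)).card

/-- The fold string S is planefilling. -/
def Planefilling (S : FWord) : Prop :=
  ∀ R : ℝ, 0 < R → ∃ n : ℕ, 1 ≤ n ∧ ∃ q : ℂ, IsGaussianInt q ∧
    ∀ z : ℂ, IsGaussianInt z → ‖z - q‖ ≤ R →
      2 ≤ countAt ((theta S)^[n] [0]) z

/-- The word θ_S(abcd), whose curve is the θ-loop of S. -/
def loopWord (S : FWord) : AWord := theta S [0, 1, 2, 3]

/-- The rounding of the closed curve of a word v (all of whose steps are unit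
segments and with f(v) = 0), as a subset of ℂ. -/
noncomputable def roundedCurve (v : AWord) : Set ℂ :=
  ⋃ k ∈ Finset.range v.length,
    (segment ℝ (pt v k + (pt v (k + 1) - pt v k) / 4)
        (pt v (k + 1) - (pt v (k + 1) - pt v k) / 4) ∪
      segment ℝ (pt v (k + 1) - (pt v (k + 1) - pt v k) / 4)
        (pt v ((k + 1) % v.length) +
          (pt v ((k + 1) % v.length + 1) - pt v ((k + 1) % v.length)) / 4))

/-- The number of indices k ∈ {0, …, |v| - 1} with z_k = z (occurrences of z among
the vertices of the closed curve of v). -/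
noncomputable def vertexCount (v : AWord) (z : ℂ) : ℕ :=
  ((Finset.range v.length).filter (fun k => pt v k = z)).card

/-- The closed curve of v is maximally simple: it is simple, and every Gaussian
integer lying in a bounded connected component of the complement of its rounding
occurs exactly twice among its vertices. -/
def MaximallySimple (v : AWord) : Prop :=
  ¬ TraversesTwice v ∧
    ∀ z : ℂ, IsGaussianInt z → z ∉ roundedCurve v →
      Bornology.IsBounded (connectedComponentIn (roundedCurve v)ᶜ z) →
      vertexCount v z = 2

/-- A D-word: letters from {a,c} (even) and {b,d} (odd) alternate. -/
def IsDWord (v : AWord) : Prop :=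
  ∀ k (h : k + 1 < v.length),
    (v[k]'(Nat.lt_of_succ_lt h)).val % 2 ≠ (v[k + 1]'h).val % 2

/-- A loop word: a nonempty D-word with f(v) = 0. -/
def IsLoopWord (v : AWord) : Prop := v ≠ [] ∧ IsDWord v ∧ fW v = 0

/-- The eight square words σᵏ(abcd), σᵏ(adcb), k = 0,1,2,3. -/
def squareWords : List AWord :=
  [[0, 1, 2, 3], [1, 2, 3, 0], [2, 3, 0, 1], [3, 0, 1, 2],
   [0, 3, 2, 1], [1, 0, 3, 2], [2, 1, 0, 3], [3, 2, 1, 0]]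

/-- K[v] ⊆ ℂ: the union of the segments of the curve of v. -/
noncomputable def KSet (v : AWord) : Set ℂ :=
  ⋃ k ∈ Finset.range v.length, segment ℝ (pt v k) (pt v (k + 1))

/-- The number of boundary points of S: Gaussian integers visited exactly once
by the curve of θ_S(a). -/
noncomputable def rCount (S : FWord) : ℕ :=
  ((Finset.range ((thetaA S).length + 1)).filter
    (fun k => countAt (thetaA S) (pt (thetaA S) k) = 1)).card

/-- The k-th point Z_k of the infinite curve of S. -/
noncomputable def Zpt (S : FWord) (k : ℕ) : ℂ := pt ((theta S)^[k] [0]) k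

/-- The fold string S is perfect. -/
def IsPerfectFold (S : FWord) : Prop :=
  SelfAvoiding S ∧
    ∀ p q : ℂ, IsGaussianInt p → IsGaussianInt q → ‖p - q‖ = 1 →
      ∃! jk : Fin 4 × ℕ,
        ({Complex.I ^ (jk.1 : ℕ) * Zpt S jk.2,
          Complex.I ^ (jk.1 : ℕ) * Zpt S (jk.2 + 1)} : Set ℂ) = ({p, q} : Set ℂ)

/-!
θ_S(a) is the word of partial sums of w along S, read in ℤ/4, and the partial sums of S̄ are
those of S read backwards and shifted, i.e. a translate of στ(θ_S(a)). Cutting S * T into its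
blocks S, S̄, S, … separated by the letters of T, the partial sums over the successive blocks
are θ_S applied to the successive letters of θ_T(a), so θ_{S*T}(a) = θ_S(θ_T(a)). Passing from
one letter to the next conjugates both sides by στ, which commutes with θ_S, so the identity
holds on every letter.
-/

namespace FoldMorphism

lemma commute_st_map {g : Alpha → Alpha} (hg : ∀ x, g (x + 1) = g x + 1) :
    Function.Commute st (List.map g) := by
  intro v
  simp only [st, List.map_reverse, List.map_map, Function.comp_def, hg]

lemma st_st (v : AWord) : st (st v) = v.map (· + 2) := by
  simp only [st, List.map_reverse, List.reverse_reverse, List.map_map]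
  congr 1
  funext x
  simp only [Function.comp_apply]
  ring

lemma iterate_st_four (v : AWord) : st^[4] v = v := by
  have h : ∀ x : Alpha, x + 2 + 2 = x := by decide
  simp only [Function.iterate_succ, Function.iterate_zero, Function.comp_apply, id, st_st,
    List.map_map, Function.comp_def, h, List.map_id']

lemma wSum_cons (x : FoldLetter) (S : FWord) : wSum (x :: S) = wInt x + wSum S := by
  simp [wSum]

lemma wSum_fbar (S : FWord) : wSum (fbar S) = -wSum S := by
  have h : ∀ x, wInt (mir x) = -wInt x := by rintro (_ | _) <;> rfl
  simp only [wSum, fbar, List.map_map, Function.comp_def, h, List.map_reverse, List.sum_reverse]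
  induction S with
  | nil => rfl
  | cons x S ih => simp [ih, add_comm]

lemma thetaA_nil : thetaA [] = [0] := by
  simp [thetaA, wSum]

lemma thetaA_cons (x : FoldLetter) (S : FWord) :
    thetaA (x :: S) = 0 :: (thetaA S).map (· + (wInt x : Alpha)) := by
  rw [thetaA, thetaA, List.length_cons, List.range_succ_eq_map]
  simp [Function.comp_def, wSum, add_comm]

lemma thetaA_append_cons (S R : FWord) (b : FoldLetter) :
    thetaA (S ++ b :: R) = thetaA S ++ (thetaA R).map (· + ((wSum S + wInt b : ℤ) : Alpha)) := by
  induction S with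
  | nil => simp [thetaA_cons, thetaA_nil, wSum]
  | cons x S ih =>
    simp only [List.cons_append, thetaA_cons, ih, List.map_append, List.map_map,
      Function.comp_def, wSum_cons]
    congr 3
    funext e
    push_cast
    ring

lemma thetaA_append_singleton (S : FWord) (x : FoldLetter) :
    thetaA (S ++ [x]) = thetaA S ++ [((wSum S + wInt x : ℤ) : Alpha)] := by
  simp [thetaA_append_cons, thetaA_nil]

lemma thetaA_fbar (S : FWord) : thetaA (fbar S) = (thetaA S).reverse.map (· - (wSum S : Alpha)) := by
  induction S with
  | nil => simp [fbar, thetaA_nil, wSum]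
  | cons x S ih =>
    have hfbar : fbar (x :: S) = fbar S ++ [mir x] := by simp [fbar]
    have hmir : wInt (mir x) = -wInt x := by cases x <;> rfl
    simp only [hfbar, thetaA_append_singleton, ih, wSum_fbar, hmir, thetaA_cons, wSum_cons,
      List.reverse_cons, List.map_append, List.map_map, List.map_reverse, Function.comp_def,
      List.map_cons, List.map_nil]
    congr 3
    · funext e
      push_cast
      ring
    · push_cast
      ring

section Folding

variable (S : FWord)

lemma thetaL_zero : thetaL S 0 = thetaA S := rfl

lemma thetaL_add_one (e : Alpha) : thetaL S (e + 1) = st (thetaL S e) := by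
  fin_cases e
  · rfl
  · rfl
  · rfl
  · exact (iterate_st_four _).symm

lemma thetaL_add_two (e : Alpha) : thetaL S (e + 2) = (thetaL S e).map (· + 2) := by
  rw [show e + 2 = e + 1 + 1 by ring, thetaL_add_one, thetaL_add_one, st_st]

lemma thetaL_fbar (e : Alpha) :
    thetaL (fbar S) e = (thetaL S (e + 1)).map (· - ((wSum S : Alpha) + 1)) := by
  have hA : thetaA (fbar S) = (st (thetaA S)).map (· - ((wSum S : Alpha) + 1)) := by
    rw [thetaA_fbar, st, List.map_map]
    congr 2
    funext x
    simp only [Function.comp_apply]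
    ring
  rw [thetaL, hA, (commute_st_map fun x => (sub_add_eq_add_sub x _ 1).symm).iterate_left,
    thetaL_add_one, thetaL, ← Function.iterate_succ_apply, Function.iterate_succ_apply']

lemma map_thetaL_fbar (b : FoldLetter) (e : Alpha) :
    (thetaL (fbar S) e).map (· + ((wSum S + wInt b : ℤ) : Alpha)) = thetaL S (e + wInt b) := by
  have hshift : (· + ((wSum S + wInt b : ℤ) : Alpha)) ∘ (· - ((wSum S : Alpha) + 1)) =
      (· + ((wInt b : Alpha) - 1)) := by
    funext x
    simp only [Function.comp_apply]
    push_cast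
    ring
  rw [thetaL_fbar, List.map_map, hshift]
  cases b with
  | D => simp [wInt]
  | U =>
    have hU : ∀ e : Alpha, e + ((-1 : ℤ) : Alpha) = e + 1 + 2 := by decide
    rw [wInt, hU, thetaL_add_two]
    rfl

lemma commute_theta_st : Function.Commute (theta S) st := by
  intro u
  simp only [theta, st, List.flatMap_map, List.reverse_flatMap, List.map_flatMap, thetaL_add_one,
    Function.comp_def]

lemma thetaA_conv (T : FWord) : thetaA (conv S T) = theta S (thetaA T) := by
  induction T generalizing S with
  | nil => simp [conv, theta, thetaA_nil, thetaL_zero]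
  | cons b T ih =>
    simp only [conv, thetaA_append_cons, ih, thetaA_cons, theta, List.flatMap_cons, thetaL_zero,
      List.map_flatMap, List.flatMap_map, map_thetaL_fbar]

lemma thetaL_conv (T : FWord) (e : Alpha) : thetaL (conv S T) e = theta S (thetaL T e) := by
  rw [thetaL, thetaL, thetaA_conv, ((commute_theta_st S).iterate_right _)]

end Folding

end FoldMorphism

open FoldMorphism in
theorem theta_conv_general (S T : FWord) (v : AWord) :
    theta (conv S T) v = theta S (theta T v) := by
  rw [theta, theta, theta, List.flatMap_assoc]
  exact congrArg v.flatMap (funext (thetaL_conv S T))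

/-- θ_{S*T} = θ_S ∘ θ_T. -/
theorem theta_conv (S T : FWord) (hS : IsFoldString S) (hT : IsFoldString T) (v : AWord) :
    theta (conv S T) v = theta S (theta T v) :=
  theta_conv_general S T v
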